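/- Let B be a building set of the lattice of flats 𝓛(M) of a matroid M on a finite ground set, assume the top flat ⊤ belongs to B, and let F ∈ B with F ≠ ⊤. Let B₀ = {X ∈ B ∖ {F} : {X, F} is a nested set of B}, and define τ : B₀ → 𝓛(M) by τ(X) = X if X is comparable to F, and τ(X) = X ∨ F if X is incomparable to F. Then for every subset I ⊆ B₀, the set I ∪ {F} is a nested set of B if and only if both {τ(X) : X ∈ I, X < F} is a nested set of B^F (with respect to the interval [⊥,F]) and {τ(X) : X ∈ I, X ≮ F} is a nested set of B_F (with respect to the interval [F,⊤]). Consequently, the map I ↦ {τ(X) : X ∈ I} is an isomorphism of simplicial complexes from the link 𝒩(B)_F onto the join of 𝒩(B^F) and 𝒩(B_F). -/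

import Mathlib

open Set

variable {α : Type*}

/-- The lattice of flats of a matroid `M`, as the subtype of `Set α`
consisting of flats, ordered by inclusion. -/
abbrev FlatLat (M : Matroid α) : Type _ := {F : Set α // M.IsFlat F}

lemma Matroid.closure_flat' (M : Matroid α) (X : Set α) : M.IsFlat (M.closure X) := by
  rw [Matroid.closure_def, Set.sInter_eq_iInter]
  have hne : Nonempty ({F : Set α | M.IsFlat F ∧ X ∩ M.E ⊆ F} : Set (Set α)) :=
    ⟨⟨M.E, M.ground_isFlat, Set.inter_subset_right⟩⟩
  exact Matroid.IsFlat.iInter fun F => F.2.1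

/-- The bottom flat `⊥`, the closure of the empty set. -/
def botF (M : Matroid α) : FlatLat M := ⟨M.closure ∅, M.closure_flat' ∅⟩

/-- The top flat `⊤`, the ground set. -/
def topF (M : Matroid α) : FlatLat M := ⟨M.E, M.ground_isFlat⟩

/-- The join `X ∨ Y` of two flats: the closure of their union. -/
def joinF (M : Matroid α) (X Y : FlatLat M) : FlatLat M :=
  ⟨M.closure (X.1 ∪ Y.1), M.closure_flat' _⟩

lemma botF_le (M : Matroid α) (F : FlatLat M) : botF M ≤ F := by
  show M.closure ∅ ⊆ F.1
  calc M.closure ∅ ⊆ M.closure F.1 := M.closure_subset_closure (Set.empty_subset _)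
    _ = F.1 := F.2.closure

lemma le_topF (M : Matroid α) (F : FlatLat M) : F ≤ topF M := F.2.subset_ground

lemma le_joinF_left (M : Matroid α) (X Y : FlatLat M) : X ≤ joinF M X Y := by
  show X.1 ⊆ M.closure (X.1 ∪ Y.1)
  exact (Set.subset_union_left).trans
    (M.subset_closure _ (Set.union_subset X.2.subset_ground Y.2.subset_ground))

lemma le_joinF_right (M : Matroid α) (X Y : FlatLat M) : Y ≤ joinF M X Y := by
  show Y.1 ⊆ M.closure (X.1 ∪ Y.1)
  exact (Set.subset_union_right).trans
    (M.subset_closure _ (Set.union_subset X.2.subset_ground Y.2.subset_ground))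

lemma joinF_le (M : Matroid α) {X Y Z : FlatLat M} (hX : X ≤ Z) (hY : Y ≤ Z) :
    joinF M X Y ≤ Z := by
  show M.closure (X.1 ∪ Y.1) ⊆ Z.1
  calc M.closure (X.1 ∪ Y.1) ⊆ M.closure Z.1 := M.closure_subset_closure (Set.union_subset hX hY)
    _ = Z.1 := Z.2.closure

/-- The set of maximal elements of `{Y ∈ B | Y ≤ X}` (the *factors* of `X`). -/
def maxBelow {L : Type*} [PartialOrder L] (B : Set L) (X : L) : Set L :=
  {Y | Y ∈ B ∧ Y ≤ X ∧ ∀ Z ∈ B, Z ≤ X → Y ≤ Z → Y = Z}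

open Classical in
/-- The tuple in `∏_{Z ∈ max(B_{≤ X})} [lo, Z]` which is equal to `Y` in coordinate
`Y` and to `lo` in every other coordinate. -/
noncomputable def unitTuple {L : Type*} [PartialOrder L] (lo : L) (B : Set L) (X : L)
    (hlo : ∀ Z ∈ B, lo ≤ Z) (Y : maxBelow B X) :
    (Z : maxBelow B X) → Set.Icc lo (Z : L) :=
  fun Z => if _ : Z = Y then ⟨(Z : L), ⟨hlo _ Z.2.1, le_rfl⟩⟩ else ⟨lo, ⟨le_rfl, hlo _ Z.2.1⟩⟩

/-- `B` is a building set of the interval `[lo, hi]` in the partial order `L`: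
`B ⊆ [lo, hi] ∖ {lo}`, and for every `X ∈ [lo, hi] ∖ {lo}`, with
`max(B_{≤X}) = {X₁, …, X_ℓ}`, there is an order isomorphism
`∏_j [lo, X_j] → [lo, X]` sending, for each `j`, the tuple equal to `X_j` in
coordinate `j` and `lo` elsewhere, to `X_j`. -/
def IsBuildingSetOn {L : Type*} [PartialOrder L] (lo hi : L) (B : Set L) : Prop :=
  ∃ hB : B ⊆ Set.Icc lo hi \ {lo},
    ∀ X, lo ≤ X → X ≤ hi → X ≠ lo →
      ∃ φ : ((Z : maxBelow B X) → Set.Icc lo (Z : L)) ≃o Set.Icc lo X,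
        ∀ Y : maxBelow B X,
          φ (unitTuple lo B X (fun Z hZ => (hB hZ).1.1) Y)
            = ⟨(Y : L), ⟨(hB Y.2.1).1.1, Y.2.2.1⟩⟩

/-- The set of maximal elements of `B`, denoted `B^top`. -/
def maxElems {L : Type*} [PartialOrder L] (B : Set L) : Set L :=
  {Y | Y ∈ B ∧ ∀ Z ∈ B, Y ≤ Z → Y = Z}

/-- The join `X₁ ∨ ⋯ ∨ X_t` of a finite collection of flats:
the closure of their union. -/
def joinFinset (M : Matroid α) (T : Finset (FlatLat M)) : FlatLat M :=
  ⟨M.closure (⋃ X ∈ T, (X : FlatLat M).1), M.closure_flat' _⟩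

/-- `S` is a nested set with respect to `B`: `S` is a finite subset of `B ∖ B^top`
such that for every subset `{X₁, …, X_t} ⊆ S` of pairwise incomparable elements with
`t ≥ 2`, the join `X₁ ∨ ⋯ ∨ X_t` does not lie in `B`. -/
def IsNested (M : Matroid α) (B S : Set (FlatLat M)) : Prop :=
  S.Finite ∧ S ⊆ B \ maxElems B ∧
    ∀ T : Finset (FlatLat M), ↑T ⊆ S → 2 ≤ T.card →
      (∀ X ∈ T, ∀ Y ∈ T, X ≠ Y → ¬ X ≤ Y ∧ ¬ Y ≤ X) →
      joinFinset M T ∉ B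

open Classical in
/-- The map `τ`: the identity on flats comparable to `F`, and `X ↦ X ∨ F` on flats
incomparable to `F`. -/
noncomputable def tau (M : Matroid α) (F X : FlatLat M) : FlatLat M :=
  if X ≤ F ∨ F ≤ X then X else joinF M X F

section BuildingAux

variable {α : Type*} {M : Matroid α}

lemma flatLat_finite (M : Matroid α) [M.Finite] : Finite (FlatLat M) := by
  have hE : M.E.Finite := M.ground_finite
  haveI := hE.to_subtype
  apply Finite.of_injective (fun F : FlatLat M => (Subtype.val ⁻¹' F.1 : Set M.E))
  intro F G h
  apply Subtype.ext
  apply Set.eq_of_subset_of_subset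
  · intro x hx
    have hxE : x ∈ M.E := F.2.subset_ground hx
    have h' : (Subtype.val ⁻¹' F.1 : Set M.E) = Subtype.val ⁻¹' G.1 := h
    have hm : (⟨x, hxE⟩ : M.E) ∈ (Subtype.val ⁻¹' F.1 : Set M.E) := hx
    rw [h'] at hm; exact hm
  · intro x hx
    have hxE : x ∈ M.E := G.2.subset_ground hx
    have h' : (Subtype.val ⁻¹' F.1 : Set M.E) = Subtype.val ⁻¹' G.1 := h
    have hm : (⟨x, hxE⟩ : M.E) ∈ (Subtype.val ⁻¹' G.1 : Set M.E) := hx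
    rw [← h'] at hm; exact hm

lemma le_joinFinset (M : Matroid α) {T : Finset (FlatLat M)} {X : FlatLat M} (hX : X ∈ T) :
    X ≤ joinFinset M T := by
  show X.1 ⊆ M.closure _
  refine Set.Subset.trans ?_ (M.subset_closure _ ?_)
  · exact Set.subset_biUnion_of_mem (u := fun X : FlatLat M => X.1) hX
  · exact Set.iUnion₂_subset fun Y _ => Y.2.subset_ground

lemma joinFinset_le (M : Matroid α) {T : Finset (FlatLat M)} {Z : FlatLat M}
    (h : ∀ X ∈ T, X ≤ Z) : joinFinset M T ≤ Z := by
  show M.closure _ ⊆ Z.1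
  calc M.closure _ ⊆ M.closure Z.1 := M.closure_subset_closure (Set.iUnion₂_subset h)
    _ = Z.1 := Z.2.closure

lemma joinF_eq_left (M : Matroid α) {X Y : FlatLat M} (h : Y ≤ X) : joinF M X Y = X :=
  le_antisymm (joinF_le M le_rfl h) (le_joinF_left M X Y)

lemma mem_ne_bot {B : Set (FlatLat M)} (hB : IsBuildingSetOn (botF M) (topF M) B)
    {X : FlatLat M} (hX : X ∈ B) : X ≠ botF M := by
  obtain ⟨hs, -⟩ := hB
  exact fun h => (hs hX).2 (Set.mem_singleton_iff.2 h)

lemma exists_factor [Finite (FlatLat M)] {B : Set (FlatLat M)} {G X : FlatLat M}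
    (hG : G ∈ B) (hGX : G ≤ X) : ∃ H, H ∈ maxBelow B X ∧ G ≤ H := by
  have hfin : ({Z | Z ∈ B ∧ G ≤ Z ∧ Z ≤ X} : Set (FlatLat M)).Finite := Set.toFinite _
  obtain ⟨H, hH0⟩ := hfin.exists_maximal ⟨G, hG, le_rfl, hGX⟩
  exact ⟨H, ⟨hH0.1.1, hH0.1.2.2, fun Z hZ hZX hHZ =>
    le_antisymm hHZ (hH0.2 ⟨hZ, hH0.1.2.1.trans hHZ, hZX⟩ hHZ)⟩, hH0.1.2.1⟩

end BuildingAux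
section BuildingAux2

variable {α : Type*} {M : Matroid α}

lemma unique_factor {B : Set (FlatLat M)} (hB : IsBuildingSetOn (botF M) (topF M) B)
    {X H₁ H₂ G : FlatLat M} (h₁ : H₁ ∈ maxBelow B X) (h₂ : H₂ ∈ maxBelow B X)
    (hne : H₁ ≠ H₂) (hG : G ∈ B) (hG1 : G ≤ H₁) (hG2 : G ≤ H₂) : False := by
  obtain ⟨hs, hφ⟩ := hB
  have hXbot : X ≠ botF M := by
    intro h
    exact (hs h₁.1).2 (Set.mem_singleton_iff.2 (le_antisymm (h ▸ h₁.2.1) (botF_le M _)))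
  obtain ⟨φ, hu⟩ := hφ X (botF_le M X) (le_topF M X) hXbot
  let i₁ : maxBelow B X := ⟨H₁, h₁⟩
  let i₂ : maxBelow B X := ⟨H₂, h₂⟩
  have hi12 : i₁ ≠ i₂ := fun h => hne (congrArg Subtype.val h)
  have hGX : G ≤ X := le_trans hG1 h₁.2.1
  set g : Set.Icc (botF M) X := ⟨G, botF_le M G, hGX⟩ with hg
  have hle1 : φ.symm g ≤ unitTuple (botF M) B X (fun Z hZ => (hs hZ).1.1) i₁ := by
    rw [← φ.le_iff_le, φ.apply_symm_apply, hu i₁]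
    exact Subtype.mk_le_mk.2 hG1
  have hle2 : φ.symm g ≤ unitTuple (botF M) B X (fun Z hZ => (hs hZ).1.1) i₂ := by
    rw [← φ.le_iff_le, φ.apply_symm_apply, hu i₂]
    exact Subtype.mk_le_mk.2 hG2
  have hcoord : ∀ j : maxBelow B X, ((φ.symm g) j).1 ≤ botF M := by
    intro j
    by_cases h : j = i₁
    · have h2 := hle2 j
      rw [unitTuple, dif_neg (h ▸ hi12)] at h2
      exact h2
    · have h2 := hle1 j
      rw [unitTuple, dif_neg h] at h2
      exact h2
  have hbot : g ≤ ⟨botF M, le_rfl, botF_le M X⟩ := by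
    have h1 : φ.symm g ≤ φ.symm ⟨botF M, le_rfl, botF_le M X⟩ := by
      intro j
      exact Subtype.coe_le_coe.1
        (le_trans (hcoord j) ((φ.symm ⟨botF M, le_rfl, botF_le M X⟩ j).2.1))
    calc g = φ (φ.symm g) := (φ.apply_symm_apply g).symm
      _ ≤ φ (φ.symm ⟨botF M, le_rfl, botF_le M X⟩) := φ.monotone h1
      _ = ⟨botF M, le_rfl, botF_le M X⟩ := φ.apply_symm_apply _
  exact (hs hG).2 (Set.mem_singleton_iff.2 (le_antisymm hbot (botF_le M G)))

end BuildingAux2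
section BuildingAux3

variable {α : Type*} {M : Matroid α}

lemma factors_pair [Finite (FlatLat M)] {B : Set (FlatLat M)}
    (hB : IsBuildingSetOn (botF M) (topF M) B)
    {X F Y : FlatLat M} (hXB : X ∈ B) (hFB : F ∈ B)
    (hXF : ¬ X ≤ F) (hFX : ¬ F ≤ X)
    (hXY : X ≤ Y) (hFY : F ≤ Y) (hlub : ∀ Z, X ≤ Z → F ≤ Z → Y ≤ Z)
    (hYB : Y ∉ B) :
    X ∈ maxBelow B Y ∧ F ∈ maxBelow B Y ∧
      (∀ G ∈ B, G ≤ Y → G ≤ X ∨ G ≤ F) ∧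
      (∀ V, V ≤ X → (∀ Z, V ≤ Z → F ≤ Z → Y ≤ Z) → V = X) := by
  obtain ⟨hs, hφ⟩ := hB
  have hYbot : Y ≠ botF M := fun h => hXF (le_trans (h ▸ hXY) (botF_le M F))
  obtain ⟨Hx, hHx, hXHx⟩ := exists_factor hXB hXY
  obtain ⟨Hf, hHf, hFHf⟩ := exists_factor hFB hFY
  have hxf : Hx ≠ Hf := by
    intro h
    have hYHx : Y ≤ Hx := hlub Hx hXHx (h ▸ hFHf)
    exact hYB (le_antisymm hYHx hHx.2.1 ▸ hHx.1)
  obtain ⟨φ, hu⟩ := hφ Y (botF_le M Y) (le_topF M Y) hYbot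
  let ix : maxBelow B Y := ⟨Hx, hHx⟩
  let iF : maxBelow B Y := ⟨Hf, hHf⟩
  have hixF : ix ≠ iF := fun h => hxf (congrArg Subtype.val h)
  have htople : ∀ (u : (Z : maxBelow B Y) → Set.Icc (botF M) (Z : FlatLat M)),
      Y ≤ (φ u).1 → ∀ j : maxBelow B Y, (j : FlatLat M) ≤ (u j).1 := by
    intro u hYu j
    have h1 : φ.symm ⟨Y, botF_le M Y, le_rfl⟩ ≤ u := by
      rw [← φ.le_iff_le, φ.apply_symm_apply]
      exact Subtype.coe_le_coe.1 hYu
    have h2 : unitTuple (botF M) B Y (fun Z hZ => (hs hZ).1.1) j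
        ≤ φ.symm ⟨Y, botF_le M Y, le_rfl⟩ := by
      rw [← φ.le_iff_le, φ.apply_symm_apply, hu j]
      exact Subtype.mk_le_mk.2 j.2.2.1
    have h3 := le_trans h2 h1 j
    rw [unitTuple, dif_pos rfl] at h3
    exact h3
  have inner : ∀ (i j : maxBelow B Y), i ≠ j →
      ∀ (W : FlatLat M), botF M ≤ W → W ≤ Y → W ≤ (j : FlatLat M) →
      ∀ (V : FlatLat M), botF M ≤ V → V ≤ Y → V ≤ (i : FlatLat M) →
      (∀ Z, V ≤ Z → W ≤ Z → Y ≤ Z) →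
      V = (i : FlatLat M) ∧ ∀ k : maxBelow B Y, k = i ∨ k = j := by
    intro i j hij W hWl hWY hWj V hVl hVY hVi hVlub
    classical
    set vt := φ.symm ⟨V, hVl, hVY⟩ with hvt
    set wt := φ.symm ⟨W, hWl, hWY⟩ with hwt
    have hvle : vt ≤ unitTuple (botF M) B Y (fun Z hZ => (hs hZ).1.1) i := by
      rw [hvt, ← φ.le_iff_le, φ.apply_symm_apply, hu i]
      exact Subtype.mk_le_mk.2 hVi
    have hwle : wt ≤ unitTuple (botF M) B Y (fun Z hZ => (hs hZ).1.1) j := by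
      rw [hwt, ← φ.le_iff_le, φ.apply_symm_apply, hu j]
      exact Subtype.mk_le_mk.2 hWj
    set uval : maxBelow B Y → FlatLat M := fun k =>
      if k = i then (vt i).1 else if k = j then (wt j).1 else botF M with huval
    have huvi : uval i = (vt i).1 := by simp only [huval, if_pos rfl]
    have huvj : uval j = (wt j).1 := by
      simp only [huval]
      rw [if_neg (fun h => hij h.symm)]
      simp
    have huvo : ∀ k, k ≠ i → k ≠ j → uval k = botF M := by
      intro k h1 h2
      simp only [huval]
      rw [if_neg h1, if_neg h2]
    have humem : ∀ k : maxBelow B Y, uval k ∈ Set.Icc (botF M) (k : FlatLat M) := by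
      intro k
      by_cases h1 : k = i
      · subst h1; rw [huvi]; exact (vt k).2
      · by_cases h2 : k = j
        · subst h2; rw [huvj]; exact (wt k).2
        · rw [huvo k h1 h2]; exact ⟨le_rfl, botF_le M _⟩
    set u : (Z : maxBelow B Y) → Set.Icc (botF M) (Z : FlatLat M) :=
      fun k => ⟨uval k, humem k⟩ with hudef
    have hvu : vt ≤ u := by
      intro k
      refine Subtype.coe_le_coe.1 ?_
      show (vt k).1 ≤ uval k
      by_cases h1 : k = i
      · subst h1; exact huvi.ge
      · have h2 := hvle k
        rw [unitTuple, dif_neg h1] at h2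
        exact le_trans h2 (humem k).1
    have hwu : wt ≤ u := by
      intro k
      refine Subtype.coe_le_coe.1 ?_
      show (wt k).1 ≤ uval k
      by_cases h2 : k = j
      · subst h2; exact huvj.ge
      · have h3 := hwle k
        rw [unitTuple, dif_neg h2] at h3
        exact le_trans h3 (humem k).1
    have hYu : Y ≤ (φ u).1 := by
      refine hVlub _ ?_ ?_
      · have h4 := φ.monotone hvu
        rw [hvt, φ.apply_symm_apply] at h4
        exact Subtype.coe_le_coe.2 h4
      · have h4 := φ.monotone hwu
        rw [hwt, φ.apply_symm_apply] at h4
        exact Subtype.coe_le_coe.2 h4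
    have htop : ∀ k : maxBelow B Y, (k : FlatLat M) ≤ uval k := fun k => htople u hYu k
    have hknotboth : ∀ k : maxBelow B Y, k = i ∨ k = j := by
      intro k
      by_contra hk
      push_neg at hk
      have h1 := htop k
      rw [huvo k hk.1 hk.2] at h1
      exact (hs k.2.1).2 (Set.mem_singleton_iff.2 (le_antisymm h1 (botF_le M _)))
    have hvi : (vt i).1 = (i : FlatLat M) := by
      refine le_antisymm (vt i).2.2 ?_
      have h1 := htop i
      rwa [huvi] at h1
    have hvunit : vt = unitTuple (botF M) B Y (fun Z hZ => (hs hZ).1.1) i := by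
      funext k
      refine Subtype.ext ?_
      by_cases h1 : k = i
      · subst h1
        rw [unitTuple, dif_pos rfl]
        exact hvi
      · rw [unitTuple, dif_neg h1]
        have h2 := hvle k
        rw [unitTuple, dif_neg h1] at h2
        exact le_antisymm h2 (vt k).2.1
    refine ⟨?_, hknotboth⟩
    have h1 := hu i
    rw [← hvunit, hvt, φ.apply_symm_apply] at h1
    exact congrArg Subtype.val h1
  have hmain := inner ix iF hixF F (botF_le M F) hFY hFHf X (botF_le M X) hXY hXHx hlub
  have hXeq : X = Hx := hmain.1
  have hFeq : F = Hf :=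
    (inner iF ix (Ne.symm hixF) X (botF_le M X) hXY hXHx F (botF_le M F) hFY hFHf
      (fun Z h1 h2 => hlub Z h2 h1)).1
  refine ⟨by rw [hXeq]; exact hHx, by rw [hFeq]; exact hHf, ?_, ?_⟩
  · intro G hG hGY
    obtain ⟨H, hH, hGH⟩ := exists_factor hG hGY
    rcases hmain.2 ⟨H, hH⟩ with h | h
    · left
      have h' : H = Hx := congrArg Subtype.val h
      rw [hXeq, ← h']
      exact hGH
    · right
      have h' : H = Hf := congrArg Subtype.val h
      rw [hFeq, ← h']
      exact hGH
  · intro V hVX hVlub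
    rw [hXeq] at hVX ⊢
    exact (inner ix iF hixF F (botF_le M F) hFY hFHf V (botF_le M V)
      (le_trans hVX hHx.2.1) hVX hVlub).1

end BuildingAux3
section BuildingAux4

variable {α : Type*} {M : Matroid α}

lemma maxElems_eq_singleton {B : Set (FlatLat M)} {t : FlatLat M} (ht : t ∈ B)
    (h : ∀ X ∈ B, X ≤ t) : maxElems B = {t} := by
  ext X
  simp only [maxElems, Set.mem_setOf_eq, Set.mem_singleton_iff]
  constructor
  · rintro ⟨hX, hmax⟩
    exact hmax t ht (h X hX)
  · rintro rfl
    exact ⟨ht, fun Z hZ hle => le_antisymm hle (h Z hZ)⟩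

lemma joinFinset_pair {X Y : FlatLat M} [DecidableEq (FlatLat M)] :
    joinFinset M {X, Y} = joinF M X Y := by
  refine le_antisymm (joinFinset_le M ?_)
    (joinF_le M (le_joinFinset M (by simp)) (le_joinFinset M (by simp)))
  intro Z hZ
  simp only [Finset.mem_insert, Finset.mem_singleton] at hZ
  rcases hZ with rfl | rfl
  · exact le_joinF_left M _ _
  · exact le_joinF_right M _ _

lemma joinFinset_singleton {X : FlatLat M} : joinFinset M {X} = X := by
  refine le_antisymm (joinFinset_le M ?_) (le_joinFinset M (by simp))
  intro Z hZ
  simp only [Finset.mem_singleton] at hZ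
  rw [hZ]

lemma tau_of_comp {F X : FlatLat M} (h : X ≤ F ∨ F ≤ X) : tau M F X = X := by
  unfold tau
  exact if_pos h

lemma tau_eq_joinF {F X : FlatLat M} (h : ¬ X ≤ F) : tau M F X = joinF M X F := by
  unfold tau
  by_cases h2 : F ≤ X
  · rw [if_pos (Or.inr h2), joinF_eq_left M h2]
  · rw [if_neg (by tauto)]

lemma le_tau (F X : FlatLat M) : X ≤ tau M F X := by
  unfold tau
  split_ifs with h
  · exact le_rfl
  · exact le_joinF_left M X F

lemma F_le_tau {F X : FlatLat M} (h : ¬ X ≤ F) : F ≤ tau M F X := by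
  rw [tau_eq_joinF h]
  exact le_joinF_right M X F

lemma tau_lub {F X : FlatLat M} (h : ¬ X ≤ F) {Z : FlatLat M} (h1 : X ≤ Z) (h2 : F ≤ Z) :
    tau M F X ≤ Z := by
  rw [tau_eq_joinF h]
  exact joinF_le M h1 h2

lemma finset_pair_mem {X Y : FlatLat M} (hne : X ≠ Y) {T : Finset (FlatLat M)}
    (hsub : ↑T ⊆ ({X, Y} : Set (FlatLat M))) (hcard : 2 ≤ T.card) :
    X ∈ T ∧ Y ∈ T := by
  constructor
  · by_contra hX
    have h1 : T.card ≤ 1 := Finset.card_le_one.2 (fun a ha b hb => by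
      rcases hsub ha with rfl | ha'
      · exact absurd ha hX
      · rcases hsub hb with rfl | hb'
        · exact absurd hb hX
        · rw [Set.mem_singleton_iff] at ha' hb'
          rw [ha', hb'])
    omega
  · by_contra hY
    have h1 : T.card ≤ 1 := Finset.card_le_one.2 (fun a ha b hb => by
      rcases hsub ha with rfl | ha'
      · rcases hsub hb with rfl | hb'
        · rfl
        · rw [Set.mem_singleton_iff] at hb'
          exact absurd (hb' ▸ hb) hY
      · rw [Set.mem_singleton_iff] at ha'
        exact absurd (ha' ▸ ha) hY)
    omega

lemma isNested_mono {B S S' : Set (FlatLat M)} (h : IsNested M B S) (hsub : S' ⊆ S) :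
    IsNested M B S' :=
  ⟨h.1.subset hsub, Set.Subset.trans hsub h.2.1,
    fun T hT hc hi => h.2.2 T (Set.Subset.trans hT hsub) hc hi⟩

lemma isNested_pair_join {B : Set (FlatLat M)} {X F : FlatLat M}
    (h : IsNested M B {X, F}) (hXF : ¬ X ≤ F) (hFX : ¬ F ≤ X) : joinF M X F ∉ B := by
  classical
  have hne : X ≠ F := fun h' => hXF (h' ▸ le_rfl)
  have h3 := h.2.2 {X, F} (by
      intro a ha
      simp only [Finset.coe_insert, Finset.coe_singleton] at ha
      exact ha)
    (by rw [Finset.card_insert_of_notMem (by simp [hne]), Finset.card_singleton])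
    (by
      intro a ha b hb hab
      simp only [Finset.mem_insert, Finset.mem_singleton] at ha hb
      rcases ha with rfl | rfl <;> rcases hb with rfl | rfl
      · exact absurd rfl hab
      · exact ⟨hXF, hFX⟩
      · exact ⟨hFX, hXF⟩
      · exact absurd rfl hab)
  rwa [joinFinset_pair] at h3

lemma isNested_pair_build {B : Set (FlatLat M)} (htopmax : maxElems B = {topF M})
    {X F : FlatLat M} (hX : X ∈ B) (hF : F ∈ B) (hXt : X ≠ topF M) (hFt : F ≠ topF M)
    (hj : ¬ X ≤ F → ¬ F ≤ X → joinF M X F ∉ B) : IsNested M B {X, F} := by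
  classical
  refine ⟨(Set.finite_singleton F).insert X, ?_, ?_⟩
  · intro Z hZ
    rcases hZ with rfl | hZ
    · exact ⟨hX, by rw [htopmax]; exact hXt⟩
    · rw [Set.mem_singleton_iff] at hZ
      subst hZ
      exact ⟨hF, by rw [htopmax]; exact hFt⟩
  · intro T hT hcard hinc
    by_cases hne : X = F
    · exfalso
      subst hne
      have : T.card ≤ 1 := Finset.card_le_one.2 (fun a ha b hb => by
        have ha' := hT ha
        have hb' := hT hb
        simp only [Set.mem_insert_iff, Set.mem_singleton_iff, or_self] at ha' hb'
        rw [ha', hb'])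
      omega
    obtain ⟨hXT, hFT⟩ := finset_pair_mem hne hT hcard
    by_cases hc : ¬ X ≤ F ∧ ¬ F ≤ X
    · have hTeq : joinFinset M T = joinF M X F := by
        refine le_antisymm (joinFinset_le M ?_)
          (joinF_le M (le_joinFinset M hXT) (le_joinFinset M hFT))
        intro Z hZ
        rcases hT hZ with rfl | hZ'
        · exact le_joinF_left M _ _
        · rw [Set.mem_singleton_iff] at hZ'
          subst hZ'
          exact le_joinF_right M _ _
      rw [hTeq]
      exact hj hc.1 hc.2
    · exfalso
      have := hinc X hXT F hFT hne
      tauto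

end BuildingAux4
section BuildingAux5

variable {α : Type*} {M : Matroid α}

lemma tau_inj [Finite (FlatLat M)] {B : Set (FlatLat M)}
    (hB : IsBuildingSetOn (botF M) (topF M) B) {F : FlatLat M} (hF : F ∈ B)
    {X X' : FlatLat M} (hX : X ∈ B) (hXn : IsNested M B {X, F})
    (hX' : X' ∈ B) (hXn' : IsNested M B {X', F})
    (heq : tau M F X = tau M F X') : X = X' := by
  by_cases h1 : X ≤ F ∨ F ≤ X <;> by_cases h2 : X' ≤ F ∨ F ≤ X'
  · rwa [tau_of_comp h1, tau_of_comp h2] at heq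
  · push_neg at h2
    exfalso
    have hj : joinF M X' F ∉ B := isNested_pair_join hXn' h2.1 h2.2
    rw [tau_of_comp h1, tau_eq_joinF h2.1] at heq
    exact hj (heq ▸ hX)
  · push_neg at h1
    exfalso
    have hj : joinF M X F ∉ B := isNested_pair_join hXn h1.1 h1.2
    rw [tau_of_comp h2, tau_eq_joinF h1.1] at heq
    exact hj (heq.symm ▸ hX')
  · push_neg at h1
    push_neg at h2
    rw [tau_eq_joinF h1.1, tau_eq_joinF h2.1] at heq
    have hj : joinF M X F ∉ B := isNested_pair_join hXn h1.1 h1.2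
    have hj' : joinF M X' F ∉ B := isNested_pair_join hXn' h2.1 h2.2
    have hfp := factors_pair hB hX hF h1.1 h1.2 (le_joinF_left M X F) (le_joinF_right M X F)
      (fun Z hz1 hz2 => joinF_le M hz1 hz2) hj
    have hfp' := factors_pair hB hX' hF h2.1 h2.2 (le_joinF_left M X' F) (le_joinF_right M X' F)
      (fun Z hz1 hz2 => joinF_le M hz1 hz2) hj'
    have hXle : X ≤ joinF M X' F := heq ▸ le_joinF_left M X F
    have hXle' : X' ≤ joinF M X F := heq ▸ le_joinF_left M X' F
    rcases hfp'.2.2.1 X hX hXle with h | h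
    · rcases hfp.2.2.1 X' hX' hXle' with h' | h'
      · exact le_antisymm h h'
      · exact absurd h' h2.1
    · exact absurd h h1.1

lemma tau_incomp [Finite (FlatLat M)] {B : Set (FlatLat M)}
    (hB : IsBuildingSetOn (botF M) (topF M) B) {F : FlatLat M} (hF : F ∈ B)
    {X X' : FlatLat M} (hX : X ∈ B) (hXF : ¬ X ≤ F)
    (hX' : X' ∈ B) (hXF' : ¬ X' ≤ F) (hXn' : IsNested M B {X', F})
    (hxx : ¬ X ≤ X') : ¬ tau M F X ≤ tau M F X' := by
  intro hle
  by_cases h2 : F ≤ X'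
  · rw [tau_of_comp (Or.inr h2)] at hle
    exact hxx (le_trans (le_tau F X) hle)
  · have hj : joinF M X' F ∉ B := isNested_pair_join hXn' hXF' h2
    have hfp := factors_pair hB hX' hF hXF' h2 (le_joinF_left M X' F) (le_joinF_right M X' F)
      (fun Z hz1 hz2 => joinF_le M hz1 hz2) hj
    have hXle : X ≤ joinF M X' F := by
      rw [← tau_eq_joinF hXF']
      exact le_trans (le_tau F X) hle
    rcases hfp.2.2.1 X hX hXle with h | h
    · exact hxx h
    · exact hXF h

end BuildingAux5
section CoreIff

variable {α : Type*} {M : Matroid α}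

lemma flt_le {X Y : FlatLat M} (h : X < Y) : X ≤ Y :=
  le_of_lt (show X.1 < Y.1 from h)

lemma flt_of_le_ne {X Y : FlatLat M} (h1 : X ≤ Y) (h2 : X ≠ Y) : X < Y :=
  show X.1 < Y.1 from lt_of_le_of_ne h1 (fun e => h2 (Subtype.ext e))

lemma flt_ne {X Y : FlatLat M} (h : X < Y) : X ≠ Y :=
  fun e => absurd (show X.1 < Y.1 from h) (by rw [e]; exact lt_irrefl _)

lemma tau_mono {F X X' : FlatLat M} (h1 : ¬ X ≤ F) (h2 : ¬ X' ≤ F) (h : X ≤ X') :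
    tau M F X ≤ tau M F X' := by
  rw [tau_eq_joinF h1, tau_eq_joinF h2]
  exact joinF_le M (le_trans h (le_joinF_left M X' F)) (le_joinF_right M X' F)

lemma core_iff [Finite (FlatLat M)] {B : Set (FlatLat M)}
    (hB : IsBuildingSetOn (botF M) (topF M) B)
    (htop : topF M ∈ B) {F : FlatLat M} (hF : F ∈ B) (hFtop : F ≠ topF M)
    {I : Set (FlatLat M)}
    (hI : I ⊆ {X : FlatLat M | X ∈ B ∧ X ≠ F ∧ IsNested M B {X, F}}) :
    IsNested M B (insert F I) ↔
      IsNested M {X : FlatLat M | X ∈ B ∧ X ≤ F} (tau M F '' {X ∈ I | X < F}) ∧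
      IsNested M {Z : FlatLat M | ∃ X ∈ B, ¬ X ≤ F ∧ Z = joinF M X F}
        (tau M F '' {X ∈ I | ¬ X < F}) := by
  classical
  set BF : Set (FlatLat M) := {X : FlatLat M | X ∈ B ∧ X ≤ F} with hBFdef
  set BQ : Set (FlatLat M) := {Z : FlatLat M | ∃ X ∈ B, ¬ X ≤ F ∧ Z = joinF M X F} with hBQdef
  have hmaxB : maxElems B = {topF M} := maxElems_eq_singleton htop (fun X _ => le_topF M X)
  have hFmem : F ∈ BF := ⟨hF, le_rfl⟩
  have hmaxBF : maxElems BF = {F} := maxElems_eq_singleton hFmem (fun X hX => hX.2)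
  have htopQ : topF M ∈ BQ :=
    ⟨topF M, htop, fun h => hFtop (le_antisymm (le_topF M F) h),
      (joinF_eq_left M (le_topF M F)).symm⟩
  have hmaxBQ : maxElems BQ = {topF M} := maxElems_eq_singleton htopQ (fun X _ => le_topF M X)
  have hIB : ∀ X ∈ I, X ∈ B := fun X hX => (hI hX).1
  have hInF : ∀ X ∈ I, X ≠ F := fun X hX => (hI hX).2.1
  have hIpair : ∀ X ∈ I, IsNested M B {X, F} := fun X hX => (hI hX).2.2
  have hInle : ∀ X ∈ I, ¬ X < F → ¬ X ≤ F := by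
    intro X hX h hle
    exact h (flt_of_le_ne hle (hInF X hX))
  have himg1 : tau M F '' {X ∈ I | X < F} = {X ∈ I | X < F} := by
    ext Z
    constructor
    · rintro ⟨X, hX, rfl⟩
      rw [tau_of_comp (Or.inl (flt_le hX.2))]
      exact hX
    · intro hZ
      exact ⟨Z, hZ, tau_of_comp (Or.inl (flt_le hZ.2))⟩
  have hIinj : ∀ X ∈ I, ∀ X' ∈ I, tau M F X = tau M F X' → X = X' :=
    fun X hX X' hX' h =>
      tau_inj hB hF (hIB X hX) (hIpair X hX) (hIB X' hX') (hIpair X' hX') h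
  constructor
  · intro hS
    have hIfin : I.Finite := hS.1.subset (Set.subset_insert F I)
    have hImem : ∀ X ∈ I, X ≠ topF M := by
      intro X hX h
      have h2 := hS.2.1 (Set.mem_insert_of_mem F hX)
      exact h2.2 (by rw [hmaxB]; exact h)
    constructor
    · refine ⟨(hIfin.subset (Set.sep_subset _ _)).image _, ?_, ?_⟩
      · rw [himg1]
        rintro Z ⟨hZI, hZF⟩
        refine ⟨⟨hIB Z hZI, flt_le hZF⟩, ?_⟩
        rw [hmaxBF]
        exact flt_ne hZF
      · intro T hT hcard hinc
        rw [himg1] at hT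
        have hTI : ↑T ⊆ insert F I := fun X hX => Set.mem_insert_of_mem F (hT hX).1
        have hj := hS.2.2 T hTI hcard hinc
        exact fun hmem => hj hmem.1
    · refine ⟨(hIfin.subset (Set.sep_subset _ _)).image _, ?_, ?_⟩
      · rintro Z ⟨X, ⟨hXI, hXnlt⟩, rfl⟩
        have hXF : ¬ X ≤ F := hInle X hXI hXnlt
        refine ⟨⟨X, hIB X hXI, hXF, tau_eq_joinF hXF⟩, ?_⟩
        rw [hmaxBQ]
        intro h
        by_cases h2 : F ≤ X
        · rw [tau_of_comp (Or.inr h2)] at h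
          exact hImem X hXI h
        · have hj := isNested_pair_join (hIpair X hXI) hXF h2
          rw [tau_eq_joinF hXF] at h
          exact hj (by rw [h]; exact htop)
      · intro T' hT' hcard' hinc' hmem
        obtain ⟨W, hWB, hWF, hWeq⟩ := hmem
        obtain ⟨T, hTsub, hTimg⟩ := Finset.subset_set_image_iff.1 hT'
        have hTI : ∀ X ∈ T, X ∈ I ∧ ¬ X ≤ F := by
          intro X hX
          have h2 := hTsub (Finset.mem_coe.2 hX)
          exact ⟨h2.1, hInle X h2.1 h2.2⟩
        have hcardT : 2 ≤ T.card :=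
          le_trans hcard' (by rw [← hTimg]; exact Finset.card_image_le)
        have hTinc : ∀ X ∈ T, ∀ X' ∈ T, X ≠ X' → ¬ X ≤ X' ∧ ¬ X' ≤ X := by
          intro X hX X' hX' hne
          have hmem1 : tau M F X ∈ T' := by
            rw [← hTimg]; exact Finset.mem_image_of_mem _ hX
          have hmem2 : tau M F X' ∈ T' := by
            rw [← hTimg]; exact Finset.mem_image_of_mem _ hX'
          have htne : tau M F X ≠ tau M F X' :=
            fun h => hne (hIinj X (hTI X hX).1 X' (hTI X' hX').1 h)
          have h3 := hinc' _ hmem1 _ hmem2 htne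
          exact ⟨fun h => h3.1 (tau_mono (hTI X hX).2 (hTI X' hX').2 h),
                 fun h => h3.2 (tau_mono (hTI X' hX').2 (hTI X hX).2 h)⟩
        set Y := joinFinset M T' with hYdef
        have hFY : F ≤ Y := by rw [hWeq]; exact le_joinF_right M W F
        have hXY : ∀ X ∈ T, X ≤ Y := by
          intro X hX
          refine le_trans (le_tau F X) (le_joinFinset M ?_)
          rw [← hTimg]; exact Finset.mem_image_of_mem _ hX
        have hYlub : ∀ Z, (∀ X ∈ T, X ≤ Z) → F ≤ Z → Y ≤ Z := by
          intro Z hZ hFZ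
          refine joinFinset_le M ?_
          intro V hV
          rw [← hTimg] at hV
          obtain ⟨X, hX, rfl⟩ := Finset.mem_image.1 hV
          exact tau_lub (hTI X hX).2 (hZ X hX) hFZ
        have hTsubS : ↑T ⊆ insert F I := fun X hX =>
          Set.mem_insert_of_mem F (hTI X (Finset.mem_coe.1 hX)).1
        by_cases hcase : ∃ X₀ ∈ T, F ≤ X₀
        · obtain ⟨X₀, hX₀T, hFX₀⟩ := hcase
          have hYT : Y = joinFinset M T :=
            le_antisymm
              (hYlub _ (fun X hX => le_joinFinset M hX)
                (le_trans hFX₀ (le_joinFinset M hX₀T)))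
              (joinFinset_le M fun X hX => hXY X hX)
          have hYB : Y ∉ B := by rw [hYT]; exact hS.2.2 T hTsubS hcardT hTinc
          have hFW : ¬ F ≤ W := by
            intro h
            exact hYB (by rw [hWeq, joinF_eq_left M h]; exact hWB)
          have hfp := factors_pair hB hWB hF hWF hFW
            (by rw [hWeq]; exact le_joinF_left M W F) hFY
            (fun Z hz1 hz2 => by rw [hWeq]; exact joinF_le M hz1 hz2) hYB
          have hallW : ∀ X ∈ T, X ≤ W := by
            intro X hX
            rcases hfp.2.2.1 X (hIB X (hTI X hX).1) (hXY X hX) with h | h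
            · exact h
            · exact absurd h (hTI X hX).2
          have hYW : Y ≤ W := by rw [hYT]; exact joinFinset_le M hallW
          have hWY : W ≤ Y := by rw [hWeq]; exact le_joinF_left M W F
          exact hYB (le_antisymm hYW hWY ▸ hWB)
        · push_neg at hcase
          have hFnotT : F ∉ T := fun h => hcase F h le_rfl
          have hTfsub : ↑(insert F T) ⊆ insert F I := by
            intro X hX
            simp only [Finset.coe_insert, Set.mem_insert_iff] at hX
            rcases hX with rfl | hX
            · exact Set.mem_insert _ _
            · exact Set.mem_insert_of_mem F (hTI X (Finset.mem_coe.1 hX)).1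
          have hTfcard : 2 ≤ (insert F T).card := by
            rw [Finset.card_insert_of_notMem hFnotT]; omega
          have hTfinc : ∀ a ∈ insert F T, ∀ b ∈ insert F T, a ≠ b → ¬ a ≤ b ∧ ¬ b ≤ a := by
            intro a ha b hb hab
            rcases Finset.mem_insert.1 ha with rfl | ha'
            · rcases Finset.mem_insert.1 hb with rfl | hb'
              · exact absurd rfl hab
              · exact ⟨hcase b hb', (hTI b hb').2⟩
            · rcases Finset.mem_insert.1 hb with rfl | hb'
              · exact ⟨(hTI a ha').2, hcase a ha'⟩
              · exact hTinc a ha' b hb' hab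
          have hYTf : Y = joinFinset M (insert F T) :=
            le_antisymm
              (hYlub _ (fun X hX => le_joinFinset M (Finset.mem_insert_of_mem hX))
                (le_joinFinset M (Finset.mem_insert_self F T)))
              (joinFinset_le M (by
                intro X hX
                rcases Finset.mem_insert.1 hX with rfl | hX'
                · exact hFY
                · exact hXY X hX'))
          have hYB : Y ∉ B := by
            rw [hYTf]; exact hS.2.2 (insert F T) hTfsub hTfcard hTfinc
          have hFW : ¬ F ≤ W := by
            intro h
            exact hYB (by rw [hWeq, joinF_eq_left M h]; exact hWB)
          have hfp := factors_pair hB hWB hF hWF hFW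
            (by rw [hWeq]; exact le_joinF_left M W F) hFY
            (fun Z hz1 hz2 => by rw [hWeq]; exact joinF_le M hz1 hz2) hYB
          have hallW : ∀ X ∈ T, X ≤ W := by
            intro X hX
            rcases hfp.2.2.1 X (hIB X (hTI X hX).1) (hXY X hX) with h | h
            · exact h
            · exact absurd h (hTI X hX).2
          have hV := hfp.2.2.2 (joinFinset M T) (joinFinset_le M hallW)
            (fun Z h1 h2 => hYlub Z (fun X hX => le_trans (le_joinFinset M hX) h1) h2)
          have hjT := hS.2.2 T hTsubS hcardT hTinc
          exact hjT (by rw [hV]; exact hWB)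
  · rintro ⟨ha, hb⟩
    have hI1fin : ({X ∈ I | X < F} : Set (FlatLat M)).Finite := by
      have h1 := ha.1
      rwa [himg1] at h1
    have hI2fin : ({X ∈ I | ¬ X < F} : Set (FlatLat M)).Finite := by
      refine Set.Finite.of_finite_image hb.1 ?_
      intro X hX X' hX' h
      exact hIinj X hX.1 X' hX'.1 h
    have hIfin : I.Finite := by
      have hsplit : I = {X ∈ I | X < F} ∪ {X ∈ I | ¬ X < F} := by
        ext X
        by_cases h : X < F <;> simp [h]
      rw [hsplit]
      exact hI1fin.union hI2fin
    refine ⟨hIfin.insert F, ?_, ?_⟩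
    · intro X hX
      rcases hX with rfl | hXI
      · exact ⟨hF, by rw [hmaxB]; exact hFtop⟩
      · refine ⟨hIB X hXI, ?_⟩
        rw [hmaxB]
        intro h
        by_cases hXlt : X < F
        · rw [h] at hXlt
          exact hFtop (le_antisymm (le_topF M F) (flt_le hXlt))
        · have hXF : ¬ X ≤ F := hInle X hXI hXlt
          have hmem : tau M F X ∈ tau M F '' {X ∈ I | ¬ X < F} := ⟨X, ⟨hXI, hXlt⟩, rfl⟩
          have h2 := hb.2.1 hmem
          rw [hmaxBQ] at h2
          apply h2.2
          show tau M F X = topF M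
          refine le_antisymm (le_topF M _) ?_
          calc topF M = X := h.symm
            _ ≤ tau M F X := le_tau F X
    · intro T hT hcard hinc hYB
      set Y := joinFinset M T with hYdef
      by_cases hFT : F ∈ T
      · set T₀ := T.erase F with hT₀def
        have hT₀I : ∀ X ∈ T₀, X ∈ I ∧ ¬ X ≤ F ∧ ¬ F ≤ X := by
          intro X hX
          have hXT := Finset.mem_of_mem_erase hX
          have hXne := Finset.ne_of_mem_erase hX
          have hXI : X ∈ I := by
            rcases hT (Finset.mem_coe.2 hXT) with rfl | h
            · exact absurd rfl hXne
            · exact h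
          have h2 := hinc X hXT F hFT hXne
          exact ⟨hXI, h2.1, h2.2⟩
        have hcard₀ : 1 ≤ T₀.card := by
          rw [hT₀def, Finset.card_erase_of_mem hFT]; omega
        obtain ⟨X₁, hX₁⟩ := Finset.card_pos.1 (show 0 < T₀.card by omega)
        by_cases hc1 : T₀.card = 1
        · obtain ⟨X₀, hX₀⟩ := Finset.card_eq_one.1 hc1
          have hX₀T₀ : X₀ ∈ T₀ := by rw [hX₀]; exact Finset.mem_singleton_self X₀
          have hYeq : Y = joinF M X₀ F := by
            refine le_antisymm (joinFinset_le M ?_)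
              (joinF_le M (le_joinFinset M (Finset.mem_of_mem_erase hX₀T₀))
                (le_joinFinset M hFT))
            intro Z hZ
            by_cases hZF : Z = F
            · rw [hZF]; exact le_joinF_right M X₀ F
            · have hZT₀ : Z ∈ T₀ := Finset.mem_erase.2 ⟨hZF, hZ⟩
              rw [hX₀, Finset.mem_singleton] at hZT₀
              rw [hZT₀]
              exact le_joinF_left M X₀ F
          have hpair := isNested_pair_join (hIpair X₀ (hT₀I X₀ hX₀T₀).1)
            (hT₀I X₀ hX₀T₀).2.1 (hT₀I X₀ hX₀T₀).2.2
          exact hpair (by rw [← hYeq]; exact hYB)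
        · have hcard₀' : 2 ≤ T₀.card := by omega
          set T' := T₀.image (tau M F) with hT'def
          have hT'sub : ↑T' ⊆ tau M F '' {X ∈ I | ¬ X < F} := by
            intro Z hZ
            rw [hT'def] at hZ
            obtain ⟨X, hX, rfl⟩ := Finset.mem_image.1 hZ
            exact ⟨X, ⟨(hT₀I X hX).1, fun hlt => (hT₀I X hX).2.1 (flt_le hlt)⟩, rfl⟩
          have hinjT₀ : Set.InjOn (tau M F) ↑T₀ := fun X hX X' hX' h =>
            hIinj X (hT₀I X (Finset.mem_coe.1 hX)).1 X' (hT₀I X' (Finset.mem_coe.1 hX')).1 h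
          have hT'card : 2 ≤ T'.card := by
            rw [hT'def, Finset.card_image_of_injOn hinjT₀]; omega
          have hT'inc : ∀ a ∈ T', ∀ b ∈ T', a ≠ b → ¬ a ≤ b ∧ ¬ b ≤ a := by
            intro a ha b hb hab
            rw [hT'def] at ha hb
            obtain ⟨X, hX, rfl⟩ := Finset.mem_image.1 ha
            obtain ⟨X', hX', rfl⟩ := Finset.mem_image.1 hb
            have hne : X ≠ X' := fun h => hab (by rw [h])
            have hi := hinc X (Finset.mem_of_mem_erase hX) X' (Finset.mem_of_mem_erase hX') hne
            exact ⟨tau_incomp hB hF (hIB X (hT₀I X hX).1) (hT₀I X hX).2.1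
                (hIB X' (hT₀I X' hX').1) (hT₀I X' hX').2.1 (hIpair X' (hT₀I X' hX').1) hi.1,
              tau_incomp hB hF (hIB X' (hT₀I X' hX').1) (hT₀I X' hX').2.1
                (hIB X (hT₀I X hX).1) (hT₀I X hX).2.1 (hIpair X (hT₀I X hX).1) hi.2⟩
          have hjoin := hb.2.2 T' hT'sub hT'card hT'inc
          apply hjoin
          have hYT' : joinFinset M T' = Y := by
            refine le_antisymm (joinFinset_le M ?_) (joinFinset_le M ?_)
            · intro Z hZ
              rw [hT'def] at hZ
              obtain ⟨X, hX, rfl⟩ := Finset.mem_image.1 hZ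
              exact tau_lub (hT₀I X hX).2.1
                (le_joinFinset M (Finset.mem_of_mem_erase hX)) (le_joinFinset M hFT)
            · intro Z hZ
              by_cases hZF : Z = F
              · rw [hZF]
                exact le_trans (F_le_tau (hT₀I X₁ hX₁).2.1)
                  (le_joinFinset M (by rw [hT'def]; exact Finset.mem_image_of_mem _ hX₁))
              · have hZT₀ : Z ∈ T₀ := Finset.mem_erase.2 ⟨hZF, hZ⟩
                exact le_trans (le_tau F Z)
                  (le_joinFinset M (by rw [hT'def]; exact Finset.mem_image_of_mem _ hZT₀))
          rw [hYT']
          have hYF : ¬ Y ≤ F := by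
            intro h
            exact (hT₀I X₁ hX₁).2.1
              (le_trans (le_joinFinset M (Finset.mem_of_mem_erase hX₁)) h)
          exact ⟨Y, hYB, hYF, (joinF_eq_left M (le_joinFinset M hFT)).symm⟩
      · have hTI' : ∀ X ∈ T, X ∈ I := by
          intro X hX
          rcases hT (Finset.mem_coe.2 hX) with rfl | h
          · exact absurd hX hFT
          · exact h
        set Tp := T.filter (fun X => ¬ X < F) with hTpdef
        by_cases hTpos : Tp.Nonempty
        · obtain ⟨X₀, hX₀⟩ := hTpos
          have hX₀T : X₀ ∈ T := (Finset.mem_filter.1 hX₀).1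
          have hX₀nlt : ¬ X₀ < F := (Finset.mem_filter.1 hX₀).2
          have hX₀nle : ¬ X₀ ≤ F := hInle X₀ (hTI' X₀ hX₀T) hX₀nlt
          have hYF : ¬ Y ≤ F := fun h => hX₀nle (le_trans (le_joinFinset M hX₀T) h)
          have hTpI : ∀ X ∈ Tp, X ∈ I ∧ ¬ X ≤ F := by
            intro X hX
            have h1 := Finset.mem_filter.1 hX
            exact ⟨hTI' X h1.1, hInle X (hTI' X h1.1) h1.2⟩
          set Z := joinF M Y F with hZdef
          set T' := Tp.image (tau M F) with hT'def
          have hZT' : joinFinset M T' = Z := by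
            refine le_antisymm (joinFinset_le M ?_) ?_
            · intro V hV
              rw [hT'def] at hV
              obtain ⟨X, hX, rfl⟩ := Finset.mem_image.1 hV
              exact tau_lub (hTpI X hX).2
                (le_trans (le_joinFinset M (Finset.mem_filter.1 hX).1) (le_joinF_left M Y F))
                (le_joinF_right M Y F)
            · refine joinF_le M (joinFinset_le M ?_) ?_
              · intro X hX
                by_cases hlt : X < F
                · exact le_trans (flt_le hlt) (le_trans (F_le_tau (hTpI X₀ hX₀).2)
                    (le_joinFinset M (by rw [hT'def]; exact Finset.mem_image_of_mem _ hX₀)))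
                · exact le_trans (le_tau F X)
                    (le_joinFinset M (by
                      rw [hT'def]
                      exact Finset.mem_image_of_mem _ (Finset.mem_filter.2 ⟨hX, hlt⟩)))
              · exact le_trans (F_le_tau (hTpI X₀ hX₀).2)
                  (le_joinFinset M (by rw [hT'def]; exact Finset.mem_image_of_mem _ hX₀))
          have hZQ : Z ∈ BQ := ⟨Y, hYB, hYF, hZdef⟩
          by_cases hc2 : 2 ≤ T'.card
          · have hT'sub : ↑T' ⊆ tau M F '' {X ∈ I | ¬ X < F} := by
              intro V hV
              rw [hT'def] at hV
              obtain ⟨X, hX, rfl⟩ := Finset.mem_image.1 hV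
              exact ⟨X, ⟨(hTpI X hX).1, (Finset.mem_filter.1 hX).2⟩, rfl⟩
            have hT'inc : ∀ a ∈ T', ∀ b ∈ T', a ≠ b → ¬ a ≤ b ∧ ¬ b ≤ a := by
              intro a ha b hb hab
              rw [hT'def] at ha hb
              obtain ⟨X, hX, rfl⟩ := Finset.mem_image.1 ha
              obtain ⟨X', hX', rfl⟩ := Finset.mem_image.1 hb
              have hne : X ≠ X' := fun h => hab (by rw [h])
              have hi := hinc X (Finset.mem_filter.1 hX).1 X' (Finset.mem_filter.1 hX').1 hne
              exact ⟨tau_incomp hB hF (hIB X (hTpI X hX).1) (hTpI X hX).2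
                  (hIB X' (hTpI X' hX').1) (hTpI X' hX').2 (hIpair X' (hTpI X' hX').1) hi.1,
                tau_incomp hB hF (hIB X' (hTpI X' hX').1) (hTpI X' hX').2
                  (hIB X (hTpI X hX).1) (hTpI X hX).2 (hIpair X (hTpI X hX).1) hi.2⟩
            exact hb.2.2 T' hT'sub hc2 hT'inc (by rw [hZT']; exact hZQ)
          · have hinjTp : Set.InjOn (tau M F) ↑Tp := fun X hX X' hX' h =>
              hIinj X (hTpI X (Finset.mem_coe.1 hX)).1 X' (hTpI X' (Finset.mem_coe.1 hX')).1 h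
            have hcardTp : Tp.card = T'.card := by
              rw [hT'def, Finset.card_image_of_injOn hinjTp]
            have hTpcard1 : Tp.card = 1 := by
              have h1 : 1 ≤ Tp.card := Finset.card_pos.2 ⟨X₀, hX₀⟩
              omega
            obtain ⟨X₀', hX₀'⟩ := Finset.card_eq_one.1 hTpcard1
            have hX₀eq : X₀ = X₀' := by
              have := hX₀
              rw [hX₀', Finset.mem_singleton] at this
              exact this
            subst hX₀eq
            have hZeq : Z = joinF M X₀ F := by
              rw [← hZT', hT'def, hX₀', Finset.image_singleton, joinFinset_singleton,
                tau_eq_joinF hX₀nle]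
            by_cases hFX₀ : F ≤ X₀
            · have hZX₀ : Z = X₀ := by rw [hZeq, joinF_eq_left M hFX₀]
              have hYX₀ : Y ≤ X₀ := by
                rw [← hZX₀, hZdef]
                exact le_joinF_left M Y F
              obtain ⟨X₁, hX₁T, hX₁ne⟩ := Finset.exists_mem_ne (show 1 < T.card by omega) X₀
              exact (hinc X₁ hX₁T X₀ hX₀T hX₁ne).1 (le_trans (le_joinFinset M hX₁T) hYX₀)
            · have hZB : Z ∉ B := by
                rw [hZeq]
                exact isNested_pair_join (hIpair X₀ (hTI' X₀ hX₀T)) hX₀nle hFX₀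
              by_cases hFY : F ≤ Y
              · exact hZB (by rw [hZdef, joinF_eq_left M hFY]; exact hYB)
              · have hfp := factors_pair hB hYB hF hYF hFY (le_joinF_left M Y F)
                  (le_joinF_right M Y F) (fun W h1 h2 => joinF_le M h1 h2) hZB
                obtain ⟨X₁, hX₁T, hX₁ne⟩ := Finset.exists_mem_ne (show 1 < T.card by omega) X₀
                have hX₁lt : X₁ < F := by
                  by_contra h
                  have hmem : X₁ ∈ Tp := Finset.mem_filter.2 ⟨hX₁T, h⟩
                  rw [hX₀', Finset.mem_singleton] at hmem
                  exact hX₁ne hmem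
                exact unique_factor hB hfp.1 hfp.2.1 (fun h => hYF (le_of_eq h))
                  (hIB X₁ (hTI' X₁ hX₁T)) (le_joinFinset M hX₁T) (flt_le hX₁lt)
        · have hallm : ∀ X ∈ T, X < F := by
            intro X hX
            by_contra h
            exact hTpos ⟨X, Finset.mem_filter.2 ⟨hX, h⟩⟩
          have hsub : ↑T ⊆ tau M F '' {X ∈ I | X < F} := by
            rw [himg1]
            intro X hX
            exact ⟨hTI' X (Finset.mem_coe.1 hX), hallm X (Finset.mem_coe.1 hX)⟩
          exact ha.2.2 T hsub hcard hinc
            ⟨hYB, joinFinset_le M (fun X hX => flt_le (hallm X hX))⟩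

end CoreIff
/-- Let `B` be a building set of the lattice of flats of a matroid on
a finite ground set with `⊤ ∈ B`, and let `F ∈ B` with `F ≠ ⊤`. Let
`B₀ = {X ∈ B ∖ {F} : {X, F} is nested}`, and let `τ(X) = X` for `X` comparable to `F`
and `τ(X) = X ∨ F` otherwise. Then for every `I ⊆ B₀` the set `I ∪ {F}` is nested with
respect to `B` if and only if `{τ(X) : X ∈ I, X < F}` is nested with respect to
`B^F` and `{τ(X) : X ∈ I, X ≮ F}` is nested with respect to `B_F`. Consequently,
`I ↦ τ(I)` is an isomorphism of simplicial complexes from the link `𝒩(B)_F`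
onto the join of `𝒩(B^F)` and `𝒩(B_F)`. -/
theorem link_face_isomorphism (M : Matroid α) [M.Finite] (B : Set (FlatLat M))
    (hB : IsBuildingSetOn (botF M) (topF M) B)
    (htop : topF M ∈ B) (F : FlatLat M) (hF : F ∈ B) (hFtop : F ≠ topF M) :
    (∀ I ⊆ {X : FlatLat M | X ∈ B ∧ X ≠ F ∧ IsNested M B {X, F}},
      (IsNested M B (insert F I) ↔
        IsNested M {X : FlatLat M | X ∈ B ∧ X ≤ F}
            (tau M F '' {X ∈ I | X < F}) ∧
          IsNested M {Z : FlatLat M | ∃ X ∈ B, ¬ X ≤ F ∧ Z = joinF M X F}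
            (tau M F '' {X ∈ I | ¬ X < F}))) ∧
    Set.BijOn (fun I : Set (FlatLat M) => tau M F '' I)
      {I : Set (FlatLat M) | IsNested M B I ∧ F ∉ I ∧ IsNested M B (insert F I)}
      {J : Set (FlatLat M) | ∃ σ σ' : Set (FlatLat M),
        IsNested M {X : FlatLat M | X ∈ B ∧ X ≤ F} σ ∧
        IsNested M {Z : FlatLat M | ∃ X ∈ B, ¬ X ≤ F ∧ Z = joinF M X F} σ' ∧
        J = σ ∪ σ'} := by
  classical
  haveI : Finite (FlatLat M) := flatLat_finite M
  have hmaxB : maxElems B = {topF M} := maxElems_eq_singleton htop (fun X _ => le_topF M X)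
  have hFmem : F ∈ {X : FlatLat M | X ∈ B ∧ X ≤ F} := ⟨hF, le_rfl⟩
  have hmaxBF : maxElems {X : FlatLat M | X ∈ B ∧ X ≤ F} = {F} :=
    maxElems_eq_singleton hFmem (fun X hX => hX.2)
  have htopQ : topF M ∈ {Z : FlatLat M | ∃ X ∈ B, ¬ X ≤ F ∧ Z = joinF M X F} :=
    ⟨topF M, htop, fun h => hFtop (le_antisymm (le_topF M F) h),
      (joinF_eq_left M (le_topF M F)).symm⟩
  have hmaxBQ : maxElems {Z : FlatLat M | ∃ X ∈ B, ¬ X ≤ F ∧ Z = joinF M X F} = {topF M} :=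
    maxElems_eq_singleton htopQ (fun X _ => le_topF M X)
  have hdom : ∀ I : Set (FlatLat M), F ∉ I → IsNested M B (insert F I) →
      I ⊆ {X : FlatLat M | X ∈ B ∧ X ≠ F ∧ IsNested M B {X, F}} := by
    intro I hFnI hSI X hX
    refine ⟨(hSI.2.1 (Set.mem_insert_of_mem F hX)).1, fun h => hFnI (h ▸ hX), ?_⟩
    refine isNested_mono hSI ?_
    intro Z hZ
    rcases hZ with rfl | hZ
    · exact Set.mem_insert_of_mem F hX
    · rw [Set.mem_singleton_iff] at hZ
      rw [hZ]
      exact Set.mem_insert F I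
  have himgsplit : ∀ I : Set (FlatLat M), tau M F '' I =
      tau M F '' {X ∈ I | X < F} ∪ tau M F '' {X ∈ I | ¬ X < F} := by
    intro I
    have hsplit : {X ∈ I | X < F} ∪ {X ∈ I | ¬ X < F} = I := by
      ext X
      simp only [Set.mem_union, Set.mem_setOf_eq]
      tauto
    rw [← Set.image_union, hsplit]
  refine ⟨fun I hI => core_iff hB htop hF hFtop hI, ?_, ?_, ?_⟩
  · -- MapsTo
    rintro I ⟨hIn, hFnI, hSI⟩
    have hIsub := hdom I hFnI hSI
    obtain ⟨h1, h2⟩ := (core_iff hB htop hF hFtop hIsub).1 hSI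
    exact ⟨_, _, h1, h2, himgsplit I⟩
  · -- InjOn
    rintro I ⟨hIn, hFnI, hSI⟩ I' ⟨hIn', hFnI', hSI'⟩ heq
    have hIsub := hdom I hFnI hSI
    have hIsub' := hdom I' hFnI' hSI'
    have heq' : tau M F '' I = tau M F '' I' := heq
    apply Set.eq_of_subset_of_subset
    · intro X hX
      have hmem : tau M F X ∈ tau M F '' I' := by
        rw [← heq']
        exact ⟨X, hX, rfl⟩
      obtain ⟨X', hX', hXeq⟩ := hmem
      have hXX' : X = X' := tau_inj hB hF (hIsub hX).1 (hIsub hX).2.2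
        (hIsub' hX').1 (hIsub' hX').2.2 hXeq.symm
      rw [hXX']
      exact hX'
    · intro X hX
      have hmem : tau M F X ∈ tau M F '' I := by
        rw [heq']
        exact ⟨X, hX, rfl⟩
      obtain ⟨X', hX', hXeq⟩ := hmem
      have hXX' : X = X' := tau_inj hB hF (hIsub' hX).1 (hIsub' hX).2.2
        (hIsub hX').1 (hIsub hX').2.2 hXeq.symm
      rw [hXX']
      exact hX'
  · -- SurjOn
    rintro J ⟨σ, σ', ha', hb', rfl⟩
    set g : FlatLat M → FlatLat M := fun Z =>
      if Z ∈ B then Z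
      else if h : ∃ X, X ∈ B ∧ ¬ X ≤ F ∧ ¬ F ≤ X ∧ joinF M X F = Z then h.choose else Z
      with hgdef
    have hσ : ∀ X ∈ σ, X ∈ B ∧ X < F ∧ IsNested M B {X, F} := by
      intro X hX
      have h1 := ha'.2.1 hX
      have hXF : X ≠ F := by
        have h2 := h1.2
        rw [hmaxBF] at h2
        exact h2
      have hXtop : X ≠ topF M := by
        intro e
        refine hFtop (le_antisymm (le_topF M F) ?_)
        rw [← e]
        exact h1.1.2
      refine ⟨h1.1.1, flt_of_le_ne h1.1.2 hXF, ?_⟩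
      exact isNested_pair_build hmaxB h1.1.1 hF hXtop hFtop
        (fun hxf _ => absurd h1.1.2 hxf)
    have hg : ∀ Z ∈ σ', g Z ∈ B ∧ g Z ≠ F ∧ IsNested M B {g Z, F} ∧
        tau M F (g Z) = Z ∧ ¬ g Z < F := by
      intro Z hZ
      have hZQ := hb'.2.1 hZ
      obtain ⟨⟨W, hWB, hWF, hWeq⟩, hZmax⟩ := hZQ
      have hFZ : F ≤ Z := by rw [hWeq]; exact le_joinF_right M W F
      have hZtop : Z ≠ topF M := by
        rw [hmaxBQ] at hZmax
        exact hZmax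
      by_cases hZB : Z ∈ B
      · have hgZ : g Z = Z := by rw [hgdef]; simp [hZB]
        have hZF : Z ≠ F := by
          intro e
          exact hWF (le_trans (le_joinF_left M W F) (le_of_eq (hWeq.symm.trans e)))
        rw [hgZ]
        refine ⟨hZB, hZF, ?_, tau_of_comp (Or.inr hFZ), ?_⟩
        · exact isNested_pair_build hmaxB hZB hF hZtop hFtop
            (fun _ h2 => absurd hFZ h2)
        · exact fun h => (flt_ne h) (le_antisymm (flt_le h) hFZ)
      · have hex : ∃ X, X ∈ B ∧ ¬ X ≤ F ∧ ¬ F ≤ X ∧ joinF M X F = Z := by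
          refine ⟨W, hWB, hWF, ?_, hWeq.symm⟩
          intro h
          exact hZB (by rw [hWeq, joinF_eq_left M h]; exact hWB)
        have hgZ : g Z = hex.choose := by
          rw [hgdef]
          simp only [if_neg hZB]
          rw [dif_pos hex]
        obtain ⟨hXB, hXF, hFX, hXeq⟩ := hex.choose_spec
        rw [hgZ]
        refine ⟨hXB, fun e => hXF (le_of_eq e), ?_, ?_, fun h => hXF (flt_le h)⟩
        · refine isNested_pair_build hmaxB hXB hF ?_ hFtop (fun _ _ => by rw [hXeq]; exact hZB)
          intro e
          exact hFX (by rw [e]; exact le_topF M F)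
        · rw [tau_eq_joinF hXF, hXeq]
    set I0 : Set (FlatLat M) := σ ∪ g '' σ' with hI0def
    have hI0fin1 : σ.Finite := ha'.1
    have hI0sub : I0 ⊆ {X : FlatLat M | X ∈ B ∧ X ≠ F ∧ IsNested M B {X, F}} := by
      rintro X (hX | ⟨Z, hZ, rfl⟩)
      · exact ⟨(hσ X hX).1, flt_ne (hσ X hX).2.1, (hσ X hX).2.2⟩
      · exact ⟨(hg Z hZ).1, (hg Z hZ).2.1, (hg Z hZ).2.2.1⟩
    have hFnI0 : F ∉ I0 := by
      rintro (hX | ⟨Z, hZ, he⟩)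
      · exact flt_ne (hσ F hX).2.1 rfl
      · exact (hg Z hZ).2.1 he
    have hsep1 : {X ∈ I0 | X < F} = σ := by
      ext X
      constructor
      · rintro ⟨hX | ⟨Z, hZ, rfl⟩, hlt⟩
        · exact hX
        · exact absurd hlt (hg Z hZ).2.2.2.2
      · intro hX
        exact ⟨Or.inl hX, (hσ X hX).2.1⟩
    have hsep2 : {X ∈ I0 | ¬ X < F} = g '' σ' := by
      ext X
      constructor
      · rintro ⟨hX | hX, hnlt⟩
        · exact absurd (hσ X hX).2.1 hnlt
        · exact hX
      · rintro ⟨Z, hZ, rfl⟩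
        exact ⟨Or.inr ⟨Z, hZ, rfl⟩, (hg Z hZ).2.2.2.2⟩
    have htau1 : tau M F '' σ = σ := by
      ext Z
      constructor
      · rintro ⟨X, hX, rfl⟩
        rw [tau_of_comp (Or.inl (flt_le (hσ X hX).2.1))]
        exact hX
      · intro hZ
        exact ⟨Z, hZ, tau_of_comp (Or.inl (flt_le (hσ Z hZ).2.1))⟩
    have htau2 : tau M F '' (g '' σ') = σ' := by
      ext V
      constructor
      · rintro ⟨Y, ⟨Z, hZ, rfl⟩, rfl⟩
        rw [(hg Z hZ).2.2.2.1]
        exact hZ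
      · intro hV
        exact ⟨g V, ⟨V, hV, rfl⟩, (hg V hV).2.2.2.1⟩
    have hnested : IsNested M B (insert F I0) := by
      refine (core_iff hB htop hF hFtop hI0sub).2 ⟨?_, ?_⟩
      · rw [hsep1, htau1]
        exact ha'
      · rw [hsep2, htau2]
        exact hb'
    refine ⟨I0, ⟨isNested_mono hnested (Set.subset_insert F I0), hFnI0, hnested⟩, ?_⟩
    show tau M F '' I0 = σ ∪ σ'
    rw [hI0def, Set.image_union, htau1, htau2]
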